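/- arXiv:1507.02257 — 2 statements merged into one kernel-verified Lean document; each statement's English description precedes it below -/
import Mathlib

section
/- If g ∈ SL(2,ℝ) acts on the real line by the Möbius map x ↦ (ax+b)/(cx+d), and x' = g·x, y' = g·y with cx+d ≠ 0 and cy+d ≠ 0, then g·C_{xy}·g⁻¹ = λ·C_{x'y'} for some nonzero real scalar λ; i.e. the correspondence (x,y) ↦ C_{xy} is SL(2,ℝ)-covariant up to scaling. -/
/-! `cycleMat x y` is the symmetrised outer product of the homogeneous column `(x, 1)` of one
point with the row `(1, -y)` annihilating the other.  The matrix `g = !![a, b; c, d]` sends the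
column `(x, 1)` to `(c x + d) (x', 1)`, and `g⁻¹` (the adjugate, as `det g = 1`) sends the row
`(1, -y)` to `(c y + d) (1, -y')`.  Hence
`g (cycleMat x y) g⁻¹ = (c x + d) (c y + d) cycleMat x' y'`. -/

open Matrix

noncomputable def cycleMat (x y : ℝ) : Matrix (Fin 2) (Fin 2) ℝ :=
  !![(x + y) / 2, -(x * y); 1, -((x + y) / 2)]

theorem Matrix.inv_fin_two_of_det_eq_one {R : Type*} [CommRing R] {a b c d : R}
    (hdet : a * d - b * c = 1) : (!![a, b; c, d])⁻¹ = !![d, -b; -c, a] := by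
  rw [inv_def, adjugate_fin_two_of, det_fin_two_of, hdet]
  simp

section Homogeneous

variable {K : Type*} [Field K] {a b c d x : K}

theorem mulVec_homogeneous (hx : c * x + d ≠ 0) :
    !![a, b; c, d] *ᵥ ![x, 1] = (c * x + d) • ![(a * x + b) / (c * x + d), 1] := by
  ext i
  fin_cases i <;> simp [mulVec, dotProduct, mul_div_cancel₀ _ hx]

theorem vecMul_homogeneous_dual (hx : c * x + d ≠ 0) :
    ![1, -x] ᵥ* !![d, -b; -c, a] = (c * x + d) • ![1, -((a * x + b) / (c * x + d))] := by
  ext i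
  fin_cases i <;> simp [vecMul, dotProduct, mul_div_cancel₀ _ hx] <;> ring

end Homogeneous

theorem cycleMat_eq_half_smul (x y : ℝ) :
    cycleMat x y = (1 / 2 : ℝ) • (vecMulVec ![x, 1] ![1, -y] + vecMulVec ![y, 1] ![1, -x]) := by
  ext i j
  fin_cases i <;> fin_cases j <;> simp [cycleMat] <;> ring

theorem cycle_covariance (a b c d x y : ℝ) (hdet : a * d - b * c = 1)
    (hx : c * x + d ≠ 0) (hy : c * y + d ≠ 0) :
    ∃ lam : ℝ, lam ≠ 0 ∧
      !![a, b; c, d] * cycleMat x y * (!![a, b; c, d])⁻¹ =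
        lam • cycleMat ((a * x + b) / (c * x + d)) ((a * y + b) / (c * y + d)) := by
  refine ⟨(c * x + d) * (c * y + d), mul_ne_zero hx hy, ?_⟩
  simp only [Matrix.inv_fin_two_of_det_eq_one hdet, cycleMat_eq_half_smul, Matrix.mul_smul,
    Matrix.smul_mul, Matrix.mul_add, Matrix.add_mul, mul_vecMulVec, vecMulVec_mul,
    mulVec_homogeneous hx, mulVec_homogeneous hy, vecMul_homogeneous_dual hx,
    vecMul_homogeneous_dual hy, smul_vecMulVec, vecMulVec_smul]
  module
end

section
/- A Möbius transformation [[a,b],[c,d]] ∈ SL(2,ℝ) mapping x_j ↦ y_j for j = 1,2,3 has a fixed point s ∈ ℝ only if s satisfies the quadratic equation s²·det[[x1,1,y1],[x2,1,y2],[x3,1,y3]] + s·det[[1,x1y1,y1-x1],[1,x2y2,y2-x2],[1,x3y3,y3-x3]] + det[[x1,-x1y1,y1],[x2,-x2y2,y2],[x3,-x3y3,y3]] = 0. -/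
/-!
Each condition `a x + b = y (c x + d)` is linear in `(a, b, c, d)`: it says that the row
`(x, 1, -x y, -y)` annihilates this vector. The three interpolation conditions and the fixed-point
condition (the pair `(s, s)`) thus give four rows killing the nonzero vector `(a, b, c, d)`, so
their `4 × 4` determinant vanishes; expanding it along the fixed-point row yields the quadratic.
-/

open Matrix

section

variable {R : Type*} [CommRing R]

def mobiusRow (x y : R) : Fin 4 → R := ![x, 1, -(x * y), -y]

theorem mobiusRow_dotProduct (x y a b c d : R) :
    mobiusRow x y ⬝ᵥ ![a, b, c, d] = a * x + b - y * (c * x + d) := by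
  simp only [dotProduct, mobiusRow, Fin.sum_univ_four, cons_val_zero, cons_val_one, cons_val]
  ring

theorem det_of_mobiusRow_eq_zero [IsDomain R] (x y : Fin 4 → R) {a b c d : R}
    (hv : ![a, b, c, d] ≠ 0) (h : ∀ i, a * x i + b = y i * (c * x i + d)) :
    (of fun i => mobiusRow (x i) (y i)).det = 0 :=
  exists_mulVec_eq_zero_iff.mp ⟨_, hv, funext fun i => by
    simp only [mulVec, of_apply, mobiusRow_dotProduct, h i, sub_self, Pi.zero_apply]⟩

theorem det_of_mobiusRow_fixedPoint (x1 x2 x3 y1 y2 y3 s : R) :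
    (of fun i => mobiusRow (![x1, x2, x3, s] i) (![y1, y2, y3, s] i)).det =
      -(s ^ 2 * (!![x1, 1, y1; x2, 1, y2; x3, 1, y3] : Matrix (Fin 3) (Fin 3) R).det +
        s * (!![1, x1 * y1, y1 - x1; 1, x2 * y2, y2 - x2; 1, x3 * y3, y3 - x3] :
              Matrix (Fin 3) (Fin 3) R).det +
        (!![x1, -(x1 * y1), y1; x2, -(x2 * y2), y2; x3, -(x3 * y3), y3] :
              Matrix (Fin 3) (Fin 3) R).det) := by
  simp [mobiusRow, det_succ_row_zero, Fin.sum_univ_succ, Fin.succAbove]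
  ring

end

theorem fixed_point_quadratic_general (a b c d x1 x2 x3 y1 y2 y3 s : ℝ)
    (hdet : a * d - b * c = 1)
    (h1 : a * x1 + b = y1 * (c * x1 + d))
    (h2 : a * x2 + b = y2 * (c * x2 + d))
    (h3 : a * x3 + b = y3 * (c * x3 + d))
    (hs : a * s + b = s * (c * s + d)) :
    s ^ 2 * (!![x1, 1, y1; x2, 1, y2; x3, 1, y3] : Matrix (Fin 3) (Fin 3) ℝ).det +
      s * (!![1, x1 * y1, y1 - x1; 1, x2 * y2, y2 - x2; 1, x3 * y3, y3 - x3] :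
            Matrix (Fin 3) (Fin 3) ℝ).det +
      (!![x1, -(x1 * y1), y1; x2, -(x2 * y2), y2; x3, -(x3 * y3), y3] :
            Matrix (Fin 3) (Fin 3) ℝ).det = 0 := by
  have hv : ![a, b, c, d] ≠ 0 := by
    intro h
    obtain ⟨rfl, rfl, rfl, rfl⟩ : a = 0 ∧ b = 0 ∧ c = 0 ∧ d = 0 :=
      ⟨congrFun h 0, congrFun h 1, congrFun h 2, congrFun h 3⟩
    norm_num at hdet
  have hrows : ∀ i, a * ![x1, x2, x3, s] i + b =
      ![y1, y2, y3, s] i * (c * ![x1, x2, x3, s] i + d) := by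
    simpa [Fin.forall_fin_succ] using ⟨h1, h2, h3, hs⟩
  have hM := det_of_mobiusRow_eq_zero _ _ hv hrows
  rwa [det_of_mobiusRow_fixedPoint, neg_eq_zero] at hM

theorem fixed_point_quadratic (a b c d x1 x2 x3 y1 y2 y3 s : ℝ)
    (hdet : a * d - b * c = 1)
    (hx12 : x1 ≠ x2) (hx23 : x2 ≠ x3) (hx13 : x1 ≠ x3)
    (hy12 : y1 ≠ y2) (hy23 : y2 ≠ y3) (hy13 : y1 ≠ y3)
    (h1 : a * x1 + b = y1 * (c * x1 + d))
    (h2 : a * x2 + b = y2 * (c * x2 + d))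
    (h3 : a * x3 + b = y3 * (c * x3 + d))
    (hs : a * s + b = s * (c * s + d)) :
    s ^ 2 * (!![x1, 1, y1; x2, 1, y2; x3, 1, y3] : Matrix (Fin 3) (Fin 3) ℝ).det +
      s * (!![1, x1 * y1, y1 - x1; 1, x2 * y2, y2 - x2; 1, x3 * y3, y3 - x3] :
            Matrix (Fin 3) (Fin 3) ℝ).det +
      (!![x1, -(x1 * y1), y1; x2, -(x2 * y2), y2; x3, -(x3 * y3), y3] :
            Matrix (Fin 3) (Fin 3) ℝ).det = 0 :=
  fixed_point_quadratic_general a b c d x1 x2 x3 y1 y2 y3 s hdet h1 h2 h3 hs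
end
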